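/- arXiv:1706.01800 — 5 statements merged into one kernel-verified Lean document; each statement's English description precedes it below -/
import Mathlib

section
/- Let q be a prime power with 2f ≤ q and let r ∈ [f−1]. Then the complete f-partite r-uniform hypergraph K_{q×f} (with f vertex classes each of size q, edges being all crossing r-sets) has a resolvable K_f^{(r)}-decomposition: there is a decomposition K of the crossing r-sets into copies of the complete r-graph on f vertices (each spanning one vertex from every class), such that K can be partitioned into q subfamilies, each of which is itself a decomposition of the crossing (r−1)-sets into complete (r−1)-graphs on f vertices. -/
open Polynomial Finset

namespace RPD

variable {𝔽 : Type*} [Field 𝔽] [DecidableEq 𝔽] {f r : ℕ}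

/-- The polynomial with coefficient vector `c`. -/
noncomputable def Pc (c : Fin r → 𝔽) : 𝔽[X] := ∑ j : Fin r, C (c j) * X ^ (j : ℕ)

lemma coeff_Pc (c : Fin r → 𝔽) (k : ℕ) :
    (Pc c).coeff k = if h : k < r then c ⟨k, h⟩ else 0 := by
  rw [Pc, finset_sum_coeff]
  simp only [coeff_C_mul, coeff_X_pow, mul_ite, mul_one, mul_zero]
  split
  · next h =>
    rw [Finset.sum_eq_single (⟨k, h⟩ : Fin r)]
    · rw [if_pos rfl]
    · intro j _ hj
      exact if_neg fun hc => hj (Fin.ext hc.symm)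
    · simp
  · next h =>
    apply Finset.sum_eq_zero
    intro j _
    rw [if_neg]
    intro hc
    exact h (hc.symm ▸ j.isLt)

lemma degree_Pc_lt (c : Fin r → 𝔽) (hr : 0 < r) : (Pc c).degree < (r : ℕ) := by
  apply lt_of_le_of_lt (degree_sum_le _ _)
  rw [Finset.sup_lt_iff (by exact_mod_cast WithBot.bot_lt_coe r)]
  intro j _
  exact lt_of_le_of_lt (degree_C_mul_X_pow_le _ _) (by exact_mod_cast j.isLt)

lemma Pc_inj {c c' : Fin r → 𝔽} (h : Pc c = Pc c') : c = c' := by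
  funext j
  have := congrArg (fun p => Polynomial.coeff p (j : ℕ)) h
  simpa [coeff_Pc, j.isLt] using this

lemma Pc_coeff (p : 𝔽[X]) (hp : p.degree < (r : ℕ)) :
    Pc (fun j : Fin r => p.coeff (j : ℕ)) = p := by
  ext k
  rw [coeff_Pc]
  split
  · rfl
  · next h =>
    exact (coeff_eq_zero_of_degree_lt (lt_of_lt_of_le hp (by exact_mod_cast not_lt.mp h))).symm

/-- A crossing set is determined by a set of indices and a value function. -/
lemma crossing_char (e : Finset (𝔽 × Fin f))
    (hcross : ∀ i : Fin f, (e.filter (fun v => v.2 = i)).card ≤ 1) :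
    ∃ (s : Finset (Fin f)) (g : Fin f → 𝔽), s.card = e.card ∧
      ∀ x i, ((x, i) ∈ e ↔ i ∈ s ∧ x = g i) := by
  classical
  have hsnd : ∀ v ∈ e, ∀ w ∈ e, v.2 = w.2 → v = w := by
    intro v hv w hw hvw
    have hv' : v ∈ e.filter (fun u => u.2 = w.2) := Finset.mem_filter.mpr ⟨hv, hvw⟩
    have hw' : w ∈ e.filter (fun u => u.2 = w.2) := Finset.mem_filter.mpr ⟨hw, rfl⟩
    exact Finset.card_le_one.mp (hcross w.2) v hv' w hw'
  set g : Fin f → 𝔽 := fun i => if h : ∃ x, (x, i) ∈ e then h.choose else 0 with hg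
  have hgmem : ∀ i, (∃ x, (x, i) ∈ e) → (g i, i) ∈ e := by
    intro i h
    have : g i = if h : ∃ x, (x, i) ∈ e then h.choose else 0 := rfl
    rw [this, dif_pos h]
    exact h.choose_spec
  refine ⟨e.image Prod.snd, g, Finset.card_image_of_injOn
    (fun v hv w hw hvw => hsnd v (Finset.mem_coe.mp hv) w (Finset.mem_coe.mp hw) hvw),
    fun x i => ?_⟩
  constructor
  · intro hxi
    refine ⟨Finset.mem_image_of_mem _ hxi, ?_⟩
    have hm := hgmem i ⟨x, hxi⟩
    have := hsnd (x, i) hxi (g i, i) hm rfl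
    exact congrArg Prod.fst this
  · rintro ⟨hi, rfl⟩
    rw [Finset.mem_image] at hi
    obtain ⟨v, hv, hvi⟩ := hi
    exact hgmem i ⟨v.1, by rwa [← hvi, Prod.mk.eta]⟩

end RPD

open RPD

/-- Resolvable partite designs: if `𝔽` is a finite field of order `q` with `2f ≤ q`
and `r ∈ [f-1]`, then the complete `f`-partite complex with parts of size `q` has a
resolvable `K_f^{(r)}`-decomposition: a family `K` of crossing `f`-sets covering every
crossing `r`-set exactly once, together with an assignment `cl` of the members of `K`
to `q` classes such that each class covers every crossing `(r-1)`-set exactly once. -/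
theorem resolvable_partite_design (𝔽 : Type*) [Field 𝔽] [Fintype 𝔽] [DecidableEq 𝔽]
    (f r : ℕ) (hq : 2 * f ≤ Fintype.card 𝔽) (hr1 : 1 ≤ r) (hrf : r ≤ f - 1) :
    ∃ (K : Finset (Finset (𝔽 × Fin f))) (cl : Finset (𝔽 × Fin f) → 𝔽),
      (∀ Q ∈ K, Q.card = f ∧ ∀ i : Fin f, (Q.filter (fun v => v.2 = i)).card ≤ 1) ∧
      (∀ e : Finset (𝔽 × Fin f), e.card = r →
        (∀ i : Fin f, (e.filter (fun v => v.2 = i)).card ≤ 1) →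
        (K.filter (fun Q => e ⊆ Q)).card = 1) ∧
      (∀ (t : 𝔽) (e : Finset (𝔽 × Fin f)), e.card = r - 1 →
        (∀ i : Fin f, (e.filter (fun v => v.2 = i)).card ≤ 1) →
        (K.filter (fun Q => cl Q = t ∧ e ⊆ Q)).card = 1) := by
  classical
  have hrpos : 0 < r := hr1
  have hf1 : 1 ≤ f := by omega
  have hrf' : r < f := by omega
  have hfq : f ≤ Fintype.card 𝔽 := by omega
  -- an embedding of the index set into 𝔽
  obtain ⟨α, hα⟩ : ∃ α : Fin f → 𝔽, Function.Injective α := by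
    have : Nonempty (Fin f ↪ 𝔽) := by
      apply Function.Embedding.nonempty_of_card_le
      simpa using hfq
    exact ⟨this.some, this.some.injective⟩
  set Qf : (Fin r → 𝔽) → Finset (𝔽 × Fin f) :=
    fun c => Finset.univ.image (fun i => ((Pc c).eval (α i), i)) with hQf
  have mem_Qf : ∀ (c : Fin r → 𝔽) (x : 𝔽) (i : Fin f),
      (x, i) ∈ Qf c ↔ x = (Pc c).eval (α i) := by
    intro c x i
    simp only [hQf, Finset.mem_image, Finset.mem_univ, true_and, Prod.mk.injEq]
    constructor
    · rintro ⟨j, h1, rfl⟩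
      exact h1.symm
    · rintro rfl
      exact ⟨i, rfl, rfl⟩
  have hQinj : Function.Injective Qf := by
    intro c c' h
    apply Pc_inj (r := r)
    apply Polynomial.eq_of_degrees_lt_of_eval_index_eq (v := α) Finset.univ hα.injOn
    · rw [Finset.card_univ, Fintype.card_fin]
      exact lt_trans (degree_Pc_lt c hrpos) (by exact_mod_cast hrf')
    · rw [Finset.card_univ, Fintype.card_fin]
      exact lt_trans (degree_Pc_lt c' hrpos) (by exact_mod_cast hrf')
    · intro i _
      have : ((Pc c).eval (α i), i) ∈ Qf c' := by
        rw [← h, mem_Qf]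
      exact (mem_Qf c' _ i).mp this
  set last : Fin r := ⟨r - 1, by omega⟩ with hlast
  set cl : Finset (𝔽 × Fin f) → 𝔽 :=
    fun Qs => if h : ∃ c : Fin r → 𝔽, Qf c = Qs then h.choose last else 0 with hcldef
  have hcl : ∀ c : Fin r → 𝔽, cl (Qf c) = c last := by
    intro c
    have h : ∃ c' : Fin r → 𝔽, Qf c' = Qf c := ⟨c, rfl⟩
    have heq : cl (Qf c) = if h : ∃ c' : Fin r → 𝔽, Qf c' = Qf c then h.choose last else 0 := rfl
    rw [heq, dif_pos h, hQinj h.choose_spec]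
  refine ⟨Finset.image Qf Finset.univ, cl, ?_, ?_, ?_⟩
  · -- each block is a crossing f-set
    intro Q hQ
    rw [Finset.mem_image] at hQ
    obtain ⟨c, _, rfl⟩ := hQ
    constructor
    · rw [show Qf c = Finset.univ.image (fun i => ((Pc c).eval (α i), i)) from rfl,
        Finset.card_image_of_injective _ (fun i j hij => congrArg Prod.snd hij)]
      simp
    · intro i
      apply Finset.card_le_one.mpr
      intro a ha b hb
      rw [Finset.mem_filter] at ha hb
      obtain ⟨ha1, ha2⟩ := ha
      obtain ⟨hb1, hb2⟩ := hb
      have ha' := (mem_Qf c a.1 i).mp (by rwa [← ha2, Prod.mk.eta])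
      have hb' := (mem_Qf c b.1 i).mp (by rwa [← hb2, Prod.mk.eta])
      have : a = (a.1, a.2) := rfl
      rw [Prod.ext_iff]
      exact ⟨by rw [ha', hb'], by rw [ha2, hb2]⟩
  · -- every crossing r-set is in exactly one block
    intro e he hcross
    obtain ⟨s, g, hs, hchar⟩ := RPD.crossing_char e hcross
    rw [he] at hs
    have hsub : ∀ c : Fin r → 𝔽, e ⊆ Qf c ↔ ∀ i ∈ s, (Pc c).eval (α i) = g i := by
      intro c
      constructor
      · intro hec i hi
        have : (g i, i) ∈ e := (hchar (g i) i).mpr ⟨hi, rfl⟩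
        exact ((mem_Qf c (g i) i).mp (hec this)).symm
      · intro hev v hv
        obtain ⟨hi, hx⟩ := (hchar v.1 v.2).mp (by rwa [Prod.mk.eta])
        rw [← Prod.mk.eta (p := v), mem_Qf, hx]
        exact (hev v.2 hi).symm
    set p : 𝔽[X] := Lagrange.interpolate s α g with hp
    have hpdeg : p.degree < (r : ℕ) := by
      have := Lagrange.degree_interpolate_lt (r := g) (s := s) hα.injOn
      rwa [hs] at this
    set c : Fin r → 𝔽 := fun j => p.coeff (j : ℕ) with hc
    have hPc : Pc c = p := Pc_coeff p hpdeg
    have hmem : e ⊆ Qf c := by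
      rw [hsub]
      intro i hi
      rw [hPc, hp]
      exact Lagrange.eval_interpolate_at_node (r := g) hα.injOn hi
    rw [Finset.card_eq_one]
    refine ⟨Qf c, Finset.eq_singleton_iff_unique_mem.mpr ⟨?_, ?_⟩⟩
    · rw [Finset.mem_filter]
      exact ⟨Finset.mem_image_of_mem _ (Finset.mem_univ _), hmem⟩
    · intro Q hQ
      rw [Finset.mem_filter, Finset.mem_image] at hQ
      obtain ⟨⟨c', _, rfl⟩, hsub'⟩ := hQ
      congr 1
      apply Pc_inj (r := r)
      apply Polynomial.eq_of_degrees_lt_of_eval_index_eq (v := α) s hα.injOn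
      · rw [hs]; exact degree_Pc_lt c' hrpos
      · rw [hs]; exact degree_Pc_lt c hrpos
      · intro i hi
        rw [(hsub c').mp hsub' i hi, (hsub c).mp hmem i hi]
  · -- resolvability
    intro t e he hcross
    obtain ⟨s, g, hs, hchar⟩ := RPD.crossing_char e hcross
    rw [he] at hs
    have hsub : ∀ c : Fin r → 𝔽, e ⊆ Qf c ↔ ∀ i ∈ s, (Pc c).eval (α i) = g i := by
      intro c
      constructor
      · intro hec i hi
        have : (g i, i) ∈ e := (hchar (g i) i).mpr ⟨hi, rfl⟩
        exact ((mem_Qf c (g i) i).mp (hec this)).symm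
      · intro hev v hv
        obtain ⟨hi, hx⟩ := (hchar v.1 v.2).mp (by rwa [Prod.mk.eta])
        rw [← Prod.mk.eta (p := v), mem_Qf, hx]
        exact (hev v.2 hi).symm
    set p₀ : 𝔽[X] := Lagrange.interpolate s α (fun i => g i - t * α i ^ (r - 1)) with hp0
    have hp0deg : p₀.degree < ((r - 1 : ℕ) : WithBot ℕ) := by
      have := Lagrange.degree_interpolate_lt (r := fun i => g i - t * α i ^ (r - 1))
        (s := s) hα.injOn
      rwa [hs] at this
    set p : 𝔽[X] := C t * X ^ (r - 1) + p₀ with hp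
    have hpdeg : p.degree < (r : ℕ) := by
      apply lt_of_le_of_lt (degree_add_le _ _)
      apply max_lt
      · exact lt_of_le_of_lt (degree_C_mul_X_pow_le _ _) (by exact_mod_cast (by omega : r - 1 < r))
      · exact lt_of_lt_of_le hp0deg (by exact_mod_cast (by omega : r - 1 ≤ r))
    have hpcoeff : p.coeff (r - 1) = t := by
      rw [hp, coeff_add, coeff_C_mul, coeff_X_pow, if_pos rfl, mul_one,
        coeff_eq_zero_of_degree_lt hp0deg, add_zero]
    have hpev : ∀ i ∈ s, p.eval (α i) = g i := by
      intro i hi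
      rw [hp, eval_add, eval_mul, eval_C, eval_pow, eval_X, hp0,
        Lagrange.eval_interpolate_at_node (r := fun i => g i - t * α i ^ (r - 1)) hα.injOn hi]
      ring
    set c : Fin r → 𝔽 := fun j => p.coeff (j : ℕ) with hc
    have hPc : Pc c = p := Pc_coeff p hpdeg
    have hclc : cl (Qf c) = t := by
      rw [hcl]
      show p.coeff (r - 1) = t
      exact hpcoeff
    have hmem : e ⊆ Qf c := by
      rw [hsub]
      intro i hi
      rw [hPc]
      exact hpev i hi
    rw [Finset.card_eq_one]
    refine ⟨Qf c, Finset.eq_singleton_iff_unique_mem.mpr ⟨?_, ?_⟩⟩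
    · rw [Finset.mem_filter]
      exact ⟨Finset.mem_image_of_mem _ (Finset.mem_univ _), hclc, hmem⟩
    · intro Q hQ
      rw [Finset.mem_filter, Finset.mem_image] at hQ
      obtain ⟨⟨c', _, rfl⟩, hcl', hsub'⟩ := hQ
      congr 1
      apply Pc_inj (r := r)
      rw [← sub_eq_zero]
      apply Polynomial.eq_zero_of_degree_lt_of_eval_index_eq_zero (v := α) s hα.injOn
      · rw [hs]
        rw [degree_lt_iff_coeff_zero]
        intro m hm
        rw [coeff_sub]
        by_cases hmr : m < r
        · have hm1 : m = r - 1 := by omega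
          have h1 : (Pc c').coeff m = t := by
            rw [coeff_Pc, dif_pos hmr]
            rw [hcl] at hcl'
            rw [← hcl']
            congr 1
            rw [hlast]
            exact Fin.ext hm1
          have h2 : (Pc c).coeff m = t := by
            rw [coeff_Pc, dif_pos hmr]
            have : (⟨m, hmr⟩ : Fin r) = last := by rw [hlast]; exact Fin.ext hm1
            rw [this, ← hcl c]
            exact hclc
          rw [h1, h2, sub_self]
        · rw [coeff_Pc, coeff_Pc, dif_neg hmr, dif_neg hmr, sub_self]
      · intro i hi
        rw [eval_sub, (hsub c').mp hsub' i hi, (hsub c).mp hmem i hi, sub_self]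
end

section
/- If F is a weakly (s_0,…,s_{r−1})-regular r-uniform hypergraph with r ≥ 2, then its shadow F^{sh} (the (r−1)-graph on V(F) whose edges are the (r−1)-sets contained in at least one edge of F) is weakly (s_0',…,s_{r−2}')-regular, where s_i' = ((r−i)/s_{r−1})·s_i for all i ∈ {0,…,r−2}. In particular, for every i-set T ⊆ V(F), |F^{sh}(T)| = ((r−i)/s_{r−1})·|F(T)|. -/
/-- If `F` is a weakly `(s 0,…,s (r-1))`-regular `r`-graph (`r ≥ 2`), then its shadow
(the `(r-1)`-graph of `(r-1)`-sets of positive degree) is weakly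
`(s 0',…,s (r-2)')`-regular with `s i' = ((r-i)/s (r-1))·(s i)`; in particular, for
every `i`-set `T` (`i ≤ r-2`), `s (r-1) · |F^{sh}(T)| = (r-i) · |F(T)|`. -/
theorem shadow_weakly_regular {V : Type*} [Fintype V] [DecidableEq V]
    (r : ℕ) (hr : 2 ≤ r)
    (F : Finset (Finset V)) (hF : ∀ e ∈ F, e.card = r)
    (s : ℕ → ℕ)
    (hreg : ∀ j < r, ∀ S : Finset V, S.card = j →
      (F.filter (fun e => S ⊆ e)).card = 0 ∨ (F.filter (fun e => S ⊆ e)).card = s j) :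
    ∀ i ≤ r - 2, ∀ T : Finset V, T.card = i →
      (s (r - 1) *
          (((Finset.powersetCard (r - 1) (Finset.univ : Finset V)).filter
              (fun S => 0 < (F.filter (fun e => S ⊆ e)).card)).filter
            (fun S => T ⊆ S)).card =
        (r - i) * (F.filter (fun e => T ⊆ e)).card) ∧
      ((((Finset.powersetCard (r - 1) (Finset.univ : Finset V)).filter
            (fun S => 0 < (F.filter (fun e => S ⊆ e)).card)).filter
          (fun S => T ⊆ S)).card = 0 ∨
        s (r - 1) *
            (((Finset.powersetCard (r - 1) (Finset.univ : Finset V)).filter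
                (fun S => 0 < (F.filter (fun e => S ⊆ e)).card)).filter
              (fun S => T ⊆ S)).card =
          (r - i) * s i) := by

  intro i hi T hT
  have hir : i < r := by omega
  set A := (((Finset.powersetCard (r - 1) (Finset.univ : Finset V)).filter
      (fun S => 0 < (F.filter (fun e => S ⊆ e)).card)).filter
      (fun S => T ⊆ S)) with hAdef
  have key : ∀ e ∈ F, (A.filter (fun S => S ⊆ e)).card = if T ⊆ e then r - i else 0 := by
    intro e he
    by_cases hTe : T ⊆ e
    · simp only [if_pos hTe]
      have hecard : e.card = r := hF e he
      have heq : A.filter (fun S => S ⊆ e) = (e \ T).image (fun x => e.erase x) := by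
        ext S
        simp only [hAdef, Finset.mem_filter, Finset.mem_powersetCard, Finset.mem_image,
          Finset.subset_univ, true_and, Finset.mem_sdiff]
        constructor
        · rintro ⟨⟨⟨hc, _⟩, hTS⟩, hSe⟩
          have h1 : (e \ S).card = 1 := by
            rw [Finset.card_sdiff_of_subset hSe, hecard, hc]; omega
          obtain ⟨x, hx⟩ := Finset.card_eq_one.mp h1
          have hxe : x ∈ e \ S := hx ▸ Finset.mem_singleton_self x
          refine ⟨x, ⟨(Finset.mem_sdiff.mp hxe).1, fun hxT => (Finset.mem_sdiff.mp hxe).2 (hTS hxT)⟩, ?_⟩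
          rw [Finset.erase_eq, ← hx, Finset.sdiff_sdiff_eq_self hSe]
        · rintro ⟨x, ⟨hxe, hxT⟩, rfl⟩
          refine ⟨⟨⟨?_, ?_⟩, fun y hy => Finset.mem_erase.mpr ⟨fun h => hxT (h ▸ hy), hTe hy⟩⟩,
            Finset.erase_subset _ _⟩
          · rw [Finset.card_erase_of_mem hxe, hecard]
          · exact Finset.card_pos.mpr ⟨e, Finset.mem_filter.mpr ⟨he, Finset.erase_subset _ _⟩⟩
      rw [heq, Finset.card_image_of_injOn (fun x hx y hy hxy => by
        have hxe : x ∈ e := (Finset.mem_sdiff.mp hx).1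
        by_contra hne
        have hmem : x ∈ e.erase y := Finset.mem_erase.mpr ⟨hne, hxe⟩
        rw [← hxy] at hmem
        exact Finset.notMem_erase x e hmem),
        Finset.card_sdiff_of_subset hTe, hecard, hT]
    · simp only [if_neg hTe]
      rw [Finset.card_eq_zero, Finset.eq_empty_iff_forall_notMem]
      intro S hS
      simp only [hAdef, Finset.mem_filter] at hS
      exact hTe (hS.1.2.trans hS.2)
  have part1 : s (r - 1) * A.card = (r - i) * (F.filter (fun e => T ⊆ e)).card := by
    have hdeg : ∀ S ∈ A, (F.filter (fun e => S ⊆ e)).card = s (r - 1) := by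
      intro S hS
      simp only [hAdef, Finset.mem_filter, Finset.mem_powersetCard] at hS
      rcases hreg (r - 1) (by omega) S hS.1.1.2 with h | h
      · omega
      · exact h
    calc s (r - 1) * A.card = ∑ S ∈ A, s (r - 1) := by
          rw [Finset.sum_const, smul_eq_mul, mul_comm]
      _ = ∑ S ∈ A, (F.filter (fun e => S ⊆ e)).card :=
          (Finset.sum_congr rfl hdeg).symm
      _ = ∑ S ∈ A, ∑ e ∈ F, if S ⊆ e then 1 else 0 := by
          simp only [Finset.card_filter]
      _ = ∑ e ∈ F, ∑ S ∈ A, if S ⊆ e then 1 else 0 := Finset.sum_comm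
      _ = ∑ e ∈ F, (A.filter (fun S => S ⊆ e)).card := by
          simp only [Finset.card_filter]
      _ = ∑ e ∈ F, if T ⊆ e then r - i else 0 := Finset.sum_congr rfl key
      _ = (r - i) * (F.filter (fun e => T ⊆ e)).card := by
          rw [← Finset.sum_filter, Finset.sum_const, smul_eq_mul, mul_comm]
  refine ⟨part1, ?_⟩
  have hA0 : s (r - 1) = 0 → A.card = 0 := by
    intro h0
    rw [Finset.card_eq_zero, Finset.eq_empty_iff_forall_notMem]
    intro S hS
    simp only [hAdef, Finset.mem_filter, Finset.mem_powersetCard] at hS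
    rcases hreg (r - 1) (by omega) S hS.1.1.2 with h | h <;> omega
  rcases hreg i hir T hT with h0 | hs
  · left
    rw [h0, mul_zero] at part1
    rcases Nat.mul_eq_zero.mp part1 with h | h
    · exact hA0 h
    · exact h
  · right
    rw [part1, hs]
end

section
/- Let H and H' be r-uniform hypergraphs. Then H ⇝ H' (H' can be obtained from H by successively identifying pairs of vertices with disjoint, non-adjacent links, and deleting isolated vertices) if and only if there exists an edge-bijective homomorphism φ from H to H', i.e. a map φ: V(H) → V(H') with φ(e) ∈ H' for all e ∈ H and |H| = |{φ(e) : e ∈ H}| = |H'|. -/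
/-- Identify vertex `x'` into `x` in a hypergraph given by its edge set. -/
def identifyVertex {V : Type*} [DecidableEq V] (G : Finset (Finset V)) (x x' : V) :
    Finset (Finset V) :=
  G.image (fun e => e.image (fun v => if v = x' then x else v))

/-- One identification step: identify two distinct vertices `x, x'` lying in no common
edge (identifiable) and with disjoint links (so no multi-edge is created). -/
def IdentStep {V : Type*} [DecidableEq V] (G G' : Finset (Finset V)) : Prop :=
  ∃ x x' : V, x ≠ x' ∧
    (∀ e ∈ G, ¬ (x ∈ e ∧ x' ∈ e)) ∧
    (∀ e ∈ G, ∀ e' ∈ G, x ∈ e → x' ∈ e' → e.erase x ≠ e'.erase x') ∧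
    G' = identifyVertex G x x'

/-- `H ⇝ H'`: starting from an isomorphic copy of `H`, a sequence of identification
steps produces `H'` (isolated vertices are irrelevant in the edge-set encoding). -/
def Squig {V : Type*} [DecidableEq V] (H H' : Finset (Finset V)) : Prop :=
  ∃ H₀ : Finset (Finset V), (∃ σ : V ≃ V, H₀ = H.image (fun e => e.image σ)) ∧
    Relation.ReflTransGen IdentStep H₀ H'

section Aux

variable {V : Type*} [DecidableEq V]

lemma image_collapse (x x' : V) (e : Finset V) (hx' : x' ∈ e) :
    e.image (fun v => if v = x' then x else v) = insert x (e.erase x') := by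
  ext v
  simp only [Finset.mem_image, Finset.mem_insert, Finset.mem_erase]
  constructor
  · rintro ⟨u, hu, rfl⟩
    by_cases h : u = x'
    · simp [h]
    · simp only [if_neg h]
      exact Or.inr ⟨h, hu⟩
  · rintro (rfl | ⟨hv, hvmem⟩)
    · exact ⟨x', hx', by simp⟩
    · exact ⟨v, hvmem, by simp [hv]⟩

lemma image_collapse_of_notMem (x x' : V) (e : Finset V) (hx' : x' ∉ e) :
    e.image (fun v => if v = x' then x else v) = e := by
  rw [Finset.image_congr (g := id), Finset.image_id]
  intro v hv
  simp only [id]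
  rw [if_neg]
  rintro rfl; exact hx' hv

/-- Each identification step is realized by a vertex map whose induced edge map
is injective on the edge set. -/
lemma identStep_exists_map {G G' : Finset (Finset V)} (h : IdentStep G G') :
    ∃ f : V → V, G' = G.image (fun e => e.image f) ∧
      (G.image (fun e => e.image f)).card = G.card := by
  obtain ⟨x, x', hne, hcom, hlink, hG'⟩ := h
  refine ⟨fun v => if v = x' then x else v, hG', ?_⟩
  rw [Finset.card_image_iff]
  intro e he e' he' heq
  simp only [Finset.mem_coe] at he he'
  dsimp only at heq
  by_cases h1 : x' ∈ e <;> by_cases h2 : x' ∈ e'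
  · rw [image_collapse x x' e h1, image_collapse x x' e' h2] at heq
    have hxe : x ∉ e.erase x' := fun hc => hcom e he ⟨Finset.mem_of_mem_erase hc, h1⟩
    have hxe' : x ∉ e'.erase x' := fun hc => hcom e' he' ⟨Finset.mem_of_mem_erase hc, h2⟩
    have herase : e.erase x' = e'.erase x' := by
      have := congrArg (fun s => Finset.erase s x) heq
      simpa [Finset.erase_insert_of_ne, Finset.erase_eq_of_notMem hxe,
        Finset.erase_eq_of_notMem hxe', Finset.erase_insert hxe, Finset.erase_insert hxe']
        using this
    calc e = insert x' (e.erase x') := (Finset.insert_erase h1).symm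
      _ = insert x' (e'.erase x') := by rw [herase]
      _ = e' := Finset.insert_erase h2
  · rw [image_collapse x x' e h1, image_collapse_of_notMem x x' e' h2] at heq
    exfalso
    have hxe : x ∉ e.erase x' := fun hc => hcom e he ⟨Finset.mem_of_mem_erase hc, h1⟩
    have hx_mem : x ∈ e' := by rw [← heq]; exact Finset.mem_insert_self _ _
    refine hlink e' he' e he hx_mem h1 ?_
    rw [← heq, Finset.erase_insert hxe]
  · rw [image_collapse_of_notMem x x' e h1, image_collapse x x' e' h2] at heq
    exfalso
    have hxe' : x ∉ e'.erase x' := fun hc => hcom e' he' ⟨Finset.mem_of_mem_erase hc, h2⟩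
    have hx_mem : x ∈ e := by rw [heq]; exact Finset.mem_insert_self _ _
    refine hlink e he e' he' hx_mem h2 ?_
    rw [heq, Finset.erase_insert hxe']
  · rwa [image_collapse_of_notMem x x' e h1, image_collapse_of_notMem x x' e' h2] at heq

/-- Core of the backward direction: collapse each vertex of the support onto the
chosen representative of its `φ`-class, one identification at a time. -/
lemma squig_core (H : Finset (Finset V)) (T : Finset V) (hT : ∀ e ∈ H, e ⊆ T)
    (φ : V → V)
    (hinj_edge : Set.InjOn (fun e : Finset V => e.image φ) (H : Set (Finset V)))
    (hinj_v : ∀ e ∈ H, Set.InjOn φ e)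
    (σ : V ≃ V) (rep : V → V)
    (hrepφ : ∀ v ∈ T, φ (rep v) = φ v)
    (hrep_idem : ∀ v ∈ T, rep (rep v) = rep v) :
    ∀ S : Finset V, S ⊆ T →
      Relation.ReflTransGen IdentStep
        (H.image (fun e => e.image (fun v => if v ∈ S then σ v else σ (rep v))))
        (H.image (fun e => e.image (fun v => σ (rep v)))) := by
  intro S
  induction S using Finset.induction_on with
  | empty =>
    intro _
    simp only [Finset.notMem_empty, if_false]
    exact Relation.ReflTransGen.refl
  | @insert a S' ha ih =>
    intro hsub
    have haT : a ∈ T := hsub (Finset.mem_insert_self a S')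
    have hS'T : S' ⊆ T := fun v hv => hsub (Finset.mem_insert_of_mem hv)
    set f : V → V := fun v => if v ∈ insert a S' then σ v else σ (rep v) with hf
    set f' : V → V := fun v => if v ∈ S' then σ v else σ (rep v) with hf'
    by_cases hcase : σ a = σ (rep a)
    · have : f = f' := by
        funext v
        by_cases hv : v = a
        · subst hv
          simp [hf, hf', ha, hcase]
        · simp [hf, hf', Finset.mem_insert, hv]
      rw [this]
      exact ih hS'T
    · -- the certificate map
      have hcert : ∀ v ∈ T, φ (σ.symm (f v)) = φ v := by
        intro v hv
        show φ (σ.symm (if v ∈ insert a S' then σ v else σ (rep v))) = φ v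
        by_cases hvS : v ∈ insert a S'
        · rw [if_pos hvS, Equiv.symm_apply_apply]
        · rw [if_neg hvS, Equiv.symm_apply_apply]
          exact hrepφ v hv
      have hfa : f a = σ a := by simp [hf]
      -- no edge of the current graph contains both σ (rep a) and σ a
      have hcom : ∀ e ∈ H, ¬ (σ (rep a) ∈ e.image f ∧ σ a ∈ e.image f) := by
        rintro e he ⟨hx, hx'⟩
        obtain ⟨u, hu, huf⟩ := Finset.mem_image.mp hx
        obtain ⟨w, hw, hwf⟩ := Finset.mem_image.mp hx'
        have hTu : u ∈ T := hT e he hu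
        have hTw : w ∈ T := hT e he hw
        have hφu : φ u = φ a := by
          have := hcert u hTu
          rw [huf] at this
          rw [← this]
          simp [hrepφ a haT]
        have hφw : φ w = φ a := by
          have := hcert w hTw
          rw [hwf] at this
          rw [← this]
          simp
        have : u = w := hinj_v e he hu hw (by rw [hφu, hφw])
        subst this
        rw [huf] at hwf
        exact hcase hwf.symm
      refine Relation.ReflTransGen.head ?_ (ih hS'T)
      refine ⟨σ (rep a), σ a, fun hc => hcase hc.symm, ?_, ?_, ?_⟩
      · -- no common edge
        rintro E hE ⟨hx, hx'⟩
        obtain ⟨e, he, rfl⟩ := Finset.mem_image.mp hE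
        exact hcom e he ⟨hx, hx'⟩
      · -- links disjoint
        rintro E hE E' hE' hx hx' heq
        obtain ⟨e, he, rfl⟩ := Finset.mem_image.mp hE
        obtain ⟨e', he', rfl⟩ := Finset.mem_image.mp hE'
        have himg : ∀ (d : Finset V), d ∈ H →
            (d.image f).image (fun y => φ (σ.symm y)) = d.image φ := by
          intro d hd
          rw [Finset.image_image]
          exact Finset.image_congr (fun v hv => hcert v (hT d hd hv))
        have h1 : (e.image f) = insert (σ (rep a)) ((e.image f).erase (σ (rep a))) :=
          (Finset.insert_erase hx).symm
        have h2 : (e'.image f) = insert (σ a) ((e'.image f).erase (σ a)) :=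
          (Finset.insert_erase hx').symm
        have hval1 : φ (σ.symm (σ (rep a))) = φ a := by simp [hrepφ a haT]
        have hval2 : φ (σ.symm (σ a)) = φ a := by simp
        have hEeq : e.image φ = e'.image φ := by
          rw [← himg e he, ← himg e' he', h1, h2, Finset.image_insert,
            Finset.image_insert, hval1, hval2, heq]
        have : e = e' := hinj_edge he he' hEeq
        subst this
        exact hcom e he ⟨hx, hx'⟩
      · -- the new graph is the identification
        rw [identifyVertex, Finset.image_image]
        symm
        apply Finset.image_congr
        intro e he
        simp only [Function.comp]
        rw [Finset.image_image]
        apply Finset.image_congr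
        intro v hv
        have hvT : v ∈ T := hT e he hv
        simp only [Function.comp]
        by_cases hvS : v ∈ S'
        · have hva : v ≠ a := fun hc => ha (hc ▸ hvS)
          have : f v = σ v := by simp [hf, Finset.mem_insert, hvS]
          rw [this, hf']
          simp only [hvS, if_pos]
          rw [if_neg]
          intro hc
          exact hva (σ.injective hc)
        · by_cases hva : v = a
          · subst hva
            rw [hfa, if_pos rfl, hf']
            simp [hvS]
          · have : f v = σ (rep v) := by simp [hf, Finset.mem_insert, hva, hvS]
            rw [this, hf']
            simp only [hvS, if_neg, if_false]
            rw [if_neg]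
            intro hc
            have hrv : rep v = a := σ.injective hc
            have : rep a = a := by rw [← hrv, hrep_idem v hvT, hrv]
            exact hcase (by rw [this])

end Aux

/-- `H ⇝ H'` if and only if there is an edge-bijective homomorphism from `H` to `H'`. -/
theorem squig_iff_edge_bijective_hom {V : Type*} [Fintype V] [DecidableEq V]
    (r : ℕ) (H H' : Finset (Finset V))
    (hH : ∀ e ∈ H, e.card = r) (hH' : ∀ e ∈ H', e.card = r) :
    Squig H H' ↔
      ∃ φ : V → V, (∀ e ∈ H, e.image φ ∈ H') ∧
        (H.image (fun e => e.image φ)).card = H.card ∧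
        (H.image (fun e => e.image φ)).card = H'.card := by
  constructor
  · rintro ⟨H₀, ⟨σ, hH₀⟩, hrtg⟩
    have key : ∀ G, Relation.ReflTransGen IdentStep H₀ G →
        ∃ f : V → V, G = H.image (fun e => e.image f) ∧ G.card = H.card := by
      intro G h
      induction h with
      | refl =>
        refine ⟨σ, hH₀, ?_⟩
        rw [hH₀]
        exact Finset.card_image_of_injective _ (Finset.image_injective σ.injective)
      | tail hab hbc ih =>
        obtain ⟨f₁, hb, hbcard⟩ := ih
        obtain ⟨f₂, hc, hccard⟩ := identStep_exists_map hbc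
        refine ⟨f₂ ∘ f₁, ?_, ?_⟩
        · rw [hc, hb, Finset.image_image]
          apply Finset.image_congr
          intro e _
          show (e.image f₁).image f₂ = e.image (f₂ ∘ f₁)
          exact Finset.image_image
        · rw [hc, hccard, hbcard]
    obtain ⟨f, hf, hcard⟩ := key H' hrtg
    refine ⟨f, ?_, ?_, ?_⟩
    · intro e he
      rw [hf]
      exact Finset.mem_image_of_mem _ he
    · rw [← hf, hcard]
    · rw [← hf]
  · rintro ⟨φ, hhom, hc1, hc2⟩
    classical
    set T : Finset V := H.biUnion id with hTdef
    have hT : ∀ e ∈ H, e ⊆ T := by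
      intro e he v hv
      exact Finset.mem_biUnion.mpr ⟨e, he, hv⟩
    have hinj_edge : Set.InjOn (fun e : Finset V => e.image φ) (H : Set (Finset V)) :=
      Finset.card_image_iff.mp hc1
    have hinj_v : ∀ e ∈ H, Set.InjOn φ e := by
      intro e he
      rw [← Finset.card_image_iff]
      rw [hH e he, hH' _ (hhom e he)]
    -- choose representatives of φ-classes
    set rep0 : V → V := fun w => if h : ∃ u, u ∈ T ∧ φ u = w then h.choose else w with hrep0
    set rep : V → V := fun v => rep0 (φ v) with hrep
    have hrep_spec : ∀ v ∈ T, rep v ∈ T ∧ φ (rep v) = φ v := by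
      intro v hv
      have h : ∃ u, u ∈ T ∧ φ u = φ v := ⟨v, hv, rfl⟩
      simp only [hrep, hrep0, dif_pos h]
      exact ⟨h.choose_spec.1, h.choose_spec.2⟩
    have hrepφ : ∀ v ∈ T, φ (rep v) = φ v := fun v hv => (hrep_spec v hv).2
    have hrepT : ∀ v ∈ T, rep v ∈ T := fun v hv => (hrep_spec v hv).1
    have hrep_idem : ∀ v ∈ T, rep (rep v) = rep v := by
      intro v hv
      show rep0 (φ (rep v)) = rep v
      rw [hrepφ v hv]
    -- build the permutation σ extending φ on the representatives
    set R : Finset V := T.image rep with hR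
    have hinjR : Set.InjOn φ R := by
      intro r1 h1 r2 h2 hφ
      simp only [hR, Finset.coe_image, Set.mem_image, Finset.mem_coe] at h1 h2
      obtain ⟨v1, hv1, rfl⟩ := h1
      obtain ⟨v2, hv2, rfl⟩ := h2
      rw [hrepφ v1 hv1, hrepφ v2 hv2] at hφ
      show rep0 (φ v1) = rep0 (φ v2)
      rw [hφ]
    have hmap : ∀ x : {x // x ∈ R}, φ x.1 ∈ R.image φ := fun x =>
      Finset.mem_image_of_mem φ x.2
    have hbij : Function.Bijective (fun x : {x // x ∈ R} =>
        (⟨φ x.1, hmap x⟩ : {x // x ∈ R.image φ})) := by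
      rw [Fintype.bijective_iff_injective_and_card]
      constructor
      · intro x y hxy
        have : φ x.1 = φ y.1 := congrArg Subtype.val hxy
        exact Subtype.ext (hinjR x.2 y.2 this)
      · rw [Fintype.card_coe, Fintype.card_coe]
        exact (Finset.card_image_of_injOn hinjR).symm
    set e : {x // x ∈ R} ≃ {x // x ∈ R.image φ} := Equiv.ofBijective _ hbij with he
    set σ : Equiv.Perm V := e.extendSubtype with hσdef
    have hσ : ∀ x ∈ R, σ x = φ x := by
      intro x hx
      rw [hσdef, Equiv.extendSubtype_apply_of_mem e x hx]
      rfl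
    have hσrep : ∀ v ∈ T, σ (rep v) = φ (rep v) := by
      intro v hv
      exact hσ _ (Finset.mem_image_of_mem rep hv)
    have hcore := squig_core H T hT φ hinj_edge hinj_v σ rep hrepφ hrep_idem T
      (le_refl T)
    refine ⟨H.image (fun e => e.image σ), ⟨σ, rfl⟩, ?_⟩
    have hstart : H.image (fun e => e.image (fun v : V => ⇑σ v)) =
        H.image (fun e => e.image (fun v => if v ∈ T then σ v else σ (rep v))) := by
      apply Finset.image_congr
      intro d hd
      exact (Finset.image_congr (fun v hv => by rw [if_pos (hT d hd hv)])).symm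
    have hend : H.image (fun e => e.image (fun v => σ (rep v))) = H' := by
      have h1 : H.image (fun e => e.image (fun v => σ (rep v))) =
          H.image (fun e => e.image φ) := by
        apply Finset.image_congr
        intro d hd
        apply Finset.image_congr
        intro v hv
        have hvT := hT d hd hv
        show σ (rep v) = φ v
        rw [hσrep v hvT, hrepφ v hvT]
      rw [h1]
      apply Finset.eq_of_subset_of_card_le
      · intro x hx
        obtain ⟨d, hd, rfl⟩ := Finset.mem_image.mp hx
        exact hhom d hd
      · rw [hc2]
    rw [hstart, ← hend]
    exact hcore
end

section
/- Let F be an r-graph, i ∈ [r−1], and T an i-subset of V(F) such that F(T) is non-empty. Let G be a complex, S an i-set in G, and L ⊆ G(S)^{(r−i)}. Suppose 𝓕' is a κ-well separated F(T)-decomposition of G(S)[L]. Then the extension 𝓕 = S ◁ 𝓕', obtained by replacing each copy F' ∈ 𝓕' of F(T) with a copy of F on vertex set S ∪ V(F') in which S plays the role of T and whose link at S is F', is a κ-well separated F-packing in G, and the set of edges of 𝓕 containing S is exactly S ⊎ L = { S ∪ e : e ∈ L }. -/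
/-!
Since every copy `π` sends `T` onto `S`, its vertex set is `S ∪ V(π')` and its edges through `S`
are exactly `S ∪ e` for the link edges `e` of `π'`; the injectivity of `π` makes "`S ⊆ π(a)`"
equivalent to "`T ⊆ a`". Two vertex sets share `S` plus at most `r - i` link vertices, so at most
`r` vertices; an `r`-edge common to two copies must then be their whole intersection, hence contain
`S`, and so it would be a common link edge. Any `r`-set in a copy has at least `r - i` vertices
outside `S`, all in the link copy, which transfers the bound `κ` of (WS2).
-/

open Finset Function

section LinkExtension

variable {U V : Type*} [DecidableEq V] {T a : Finset U} {S : Finset V} {π : U → V}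

theorem subset_image_iff_of_image_eq (hπ : Injective π) (hT : T.image π = S) :
    S ⊆ a.image π ↔ T ⊆ a := by
  rw [← hT, image_subset_image_iff hπ]

variable [DecidableEq U]

theorem image_eq_union_image_sdiff (hT : T.image π = S) (ha : T ⊆ a) :
    a.image π = S ∪ (a \ T).image π := by
  rw [← hT, ← image_union, union_sdiff_of_subset ha]

theorem image_sdiff_of_image_eq (hπ : Injective π) (hT : T.image π = S) (a : Finset U) :
    (a \ T).image π = a.image π \ S := by
  rw [image_sdiff _ _ hπ, hT]

variable [Fintype U]

theorem image_univ_eq_union_image_compl (hT : T.image π = S) :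
    univ.image π = S ∪ (univ \ T).image π :=
  image_eq_union_image_sdiff hT (subset_univ T)

theorem card_inter_image_univ_le {π' : U → V} {m : ℕ} (hT : T.image π = S) (hT' : T.image π' = S)
    (hm : ((univ \ T).image π ∩ (univ \ T).image π').card ≤ m) :
    (univ.image π ∩ univ.image π').card ≤ S.card + m := by
  rw [image_univ_eq_union_image_compl hT, image_univ_eq_union_image_compl hT',
    ← union_inter_distrib_left]
  exact (card_union_le _ _).trans (by gcongr)

theorem notMem_image_image_of_link_disjoint {π' : U → V} {F : Finset (Finset U)} {r : ℕ}
    (hF : ∀ a ∈ F, a.card = r) (hπ : Injective π) (hπ' : Injective π')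
    (hT : T.image π = S) (hT' : T.image π' = S)
    (hinter : (univ.image π ∩ univ.image π').card ≤ r)
    (hdisj : ∀ e ∈ (F.filter (T ⊆ ·)).image (fun a => (a \ T).image π),
      e ∉ (F.filter (T ⊆ ·)).image (fun a => (a \ T).image π'))
    {e : Finset V} (he : e ∈ F.image (image π)) : e ∉ F.image (image π') := by
  rintro he'
  obtain ⟨a, haF, rfl⟩ := mem_image.mp he
  obtain ⟨a', ha'F, heq⟩ := mem_image.mp he'
  have hsub : a.image π ⊆ univ.image π ∩ univ.image π' :=
    subset_inter (image_subset_image (subset_univ a)) (heq ▸ image_subset_image (subset_univ a'))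
  have hcard : (a.image π).card = r := card_image_of_injective a hπ ▸ hF a haF
  have hS : S ⊆ a.image π := by
    rw [eq_of_subset_of_card_le hsub (hcard ▸ hinter), image_univ_eq_union_image_compl hT,
      image_univ_eq_union_image_compl hT', ← union_inter_distrib_left]
    exact subset_union_left
  have hTa := (subset_image_iff_of_image_eq hπ hT).mp hS
  have hTa' := (subset_image_iff_of_image_eq hπ' hT').mp (heq ▸ hS)
  refine hdisj _ (mem_image_of_mem _ (mem_filter.mpr ⟨haF, hTa⟩))
    (mem_image.mpr ⟨a', mem_filter.mpr ⟨ha'F, hTa'⟩, ?_⟩)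
  rw [image_sdiff_of_image_eq hπ hT, image_sdiff_of_image_eq hπ' hT', heq]

theorem card_filter_subset_image_univ_le (𝓕 : Finset (U → V)) (hT : ∀ π ∈ 𝓕, T.image π = S)
    {e : Finset V} {κ : ℕ}
    (hws : ∀ e' : Finset V, e'.card = e.card - S.card →
      (𝓕.filter (fun π => e' ⊆ (univ \ T).image π)).card ≤ κ) :
    (𝓕.filter (fun π => e ⊆ univ.image π)).card ≤ κ := by
  obtain ⟨e', he', he'card⟩ := exists_subset_card_eq (le_card_sdiff S e)
  refine le_trans (card_le_card fun π hπ => ?_) (hws e' he'card)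
  obtain ⟨hπ𝓕, he⟩ := mem_filter.mp hπ
  rw [image_univ_eq_union_image_compl (hT π hπ𝓕)] at he
  exact mem_filter.mpr ⟨hπ𝓕, he'.trans (sdiff_le_iff.mpr he)⟩

end LinkExtension

theorem link_extension_packing_general {U V : Type*}
    [Fintype U] [DecidableEq U] [DecidableEq V]
    (r i κ : ℕ) (hir : i ≤ r - 1)
    (F : Finset (Finset U)) (hF : ∀ e ∈ F, e.card = r)
    (T : Finset U)
    (G : Finset (Finset V))
    (S : Finset V) (hS : S.card = i)
    (L : Finset (Finset V))
    (𝓕 : Finset (U → V))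
    (hinj : ∀ π ∈ 𝓕, Function.Injective π)
    (hrole : ∀ π ∈ 𝓕, T.image π = S)
    -- each link copy has its vertex set in the complex `G(S)[L]`:
    (hin : ∀ π ∈ 𝓕,
      Disjoint ((Finset.univ \ T).image π) S ∧
      S ∪ (Finset.univ \ T).image π ∈ G ∧
      ∀ e ∈ ((Finset.univ \ T).image π).powersetCard (r - i), e ∈ L)
    -- the link copies are pairwise edge-disjoint, have their edges in `L`,
    -- and together cover `L`:
    (hdisj : ∀ π ∈ 𝓕, ∀ π' ∈ 𝓕, π ≠ π' →
      ∀ e, e ∈ (F.filter (fun a => T ⊆ a)).image (fun a => (a \ T).image π) →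
        e ∉ (F.filter (fun a => T ⊆ a)).image (fun a => (a \ T).image π'))
    (hedges : ∀ π ∈ 𝓕, ∀ a ∈ F, T ⊆ a → (a \ T).image π ∈ L)
    (hcover : ∀ e ∈ L, ∃ π ∈ 𝓕,
      e ∈ (F.filter (fun a => T ⊆ a)).image (fun a => (a \ T).image π))
    -- `𝓕'` is `κ`-well separated:
    (hws1 : ∀ π ∈ 𝓕, ∀ π' ∈ 𝓕, π ≠ π' →
      (((Finset.univ \ T).image π) ∩ ((Finset.univ \ T).image π')).card ≤ r - i)
    (hws2 : ∀ e : Finset V, e.card = r - i →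
      (𝓕.filter (fun π => e ⊆ (Finset.univ \ T).image π)).card ≤ κ) :
    -- conclusion: `S ◁ 𝓕'` is a `κ`-well separated `F`-packing in `G`, and
    -- its edges containing `S` are exactly `S ⊎ L`.
    ((∀ π ∈ 𝓕, (Finset.univ : Finset U).image π ∈ G) ∧
      (∀ π ∈ 𝓕, ∀ π' ∈ 𝓕, π ≠ π' →
        ∀ e, e ∈ F.image (fun a => a.image π) → e ∉ F.image (fun a => a.image π')) ∧
      (∀ π ∈ 𝓕, ∀ π' ∈ 𝓕, π ≠ π' →
        (((Finset.univ : Finset U).image π) ∩ ((Finset.univ : Finset U).image π')).card ≤ r) ∧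
      (∀ e : Finset V, e.card = r →
        (𝓕.filter (fun π => e ⊆ (Finset.univ : Finset U).image π)).card ≤ κ)) ∧
    (∀ e : Finset V,
      ((∃ π ∈ 𝓕, e ∈ F.image (fun a => a.image π)) ∧ S ⊆ e) ↔
        ∃ e' ∈ L, e = S ∪ e') := by
  have hcopy : ∀ π ∈ 𝓕, ∀ a : Finset U, T ⊆ a → a.image π = S ∪ (a \ T).image π :=
    fun π hπ _ => image_eq_union_image_sdiff (hrole π hπ)
  have hws1' : ∀ π ∈ 𝓕, ∀ π' ∈ 𝓕, π ≠ π' →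
      ((univ : Finset U).image π ∩ (univ : Finset U).image π').card ≤ r := fun π hπ π' hπ' hne =>
    (card_inter_image_univ_le (hrole π hπ) (hrole π' hπ') (hws1 π hπ π' hπ' hne)).trans
      (by omega)
  refine ⟨⟨fun π hπ => image_univ_eq_union_image_compl (hrole π hπ) ▸ (hin π hπ).2.1,
    fun π hπ π' hπ' hne _ => notMem_image_image_of_link_disjoint hF (hinj π hπ) (hinj π' hπ')
      (hrole π hπ) (hrole π' hπ') (hws1' π hπ π' hπ' hne) (hdisj π hπ π' hπ' hne), hws1',
    fun e he => card_filter_subset_image_univ_le 𝓕 hrole (hS ▸ he ▸ hws2)⟩, fun e => ⟨?_, ?_⟩⟩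
  · rintro ⟨⟨π, hπ, he⟩, hSe⟩
    obtain ⟨a, haF, rfl⟩ := mem_image.mp he
    have hTa := (subset_image_iff_of_image_eq (hinj π hπ) (hrole π hπ)).mp hSe
    exact ⟨_, hedges π hπ a haF hTa, hcopy π hπ a hTa⟩
  · rintro ⟨e', he'L, rfl⟩
    obtain ⟨π, hπ, hmem⟩ := hcover e' he'L
    obtain ⟨a, ha, rfl⟩ := mem_image.mp hmem
    rw [mem_filter] at ha
    exact ⟨⟨π, hπ, mem_image.mpr ⟨a, ha.1, hcopy π hπ a ha.2⟩⟩, subset_union_left⟩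

/-- Proposition on link extensions: let `F` be an `r`-graph on vertex type `U`
(`|U| = f > r`), `T` an `i`-set of `V(F)` with non-empty link `F(T)`, `G` a complex,
`S` an `i`-set in `G`, and `L ⊆ G(S)^{(r-i)}`. A `κ`-well separated
`F(T)`-decomposition `𝓕'` of `G(S)[L]`, together with chosen extensions sending `T`
to `S` (encoded as a family `𝓕` of injective maps `π : U → V` with `π(T) = S` whose
restrictions away from `T` form `𝓕'`), yields `𝓕 = S ◁ 𝓕'`, a `κ`-well separated
`F`-packing in `G` whose edges containing `S` are exactly `S ⊎ L`. -/
theorem link_extension_packing {U V : Type*}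
    [Fintype U] [DecidableEq U] [Fintype V] [DecidableEq V]
    (r i κ : ℕ) (hi1 : 1 ≤ i) (hir : i ≤ r - 1) (hrf : r < Fintype.card U)
    (F : Finset (Finset U)) (hF : ∀ e ∈ F, e.card = r)
    (T : Finset U) (hT : T.card = i) (hFT : ∃ e ∈ F, T ⊆ e)
    (G : Finset (Finset V)) (hG : ∀ e ∈ G, ∀ e' ⊆ e, e' ∈ G)
    (S : Finset V) (hS : S.card = i) (hSG : S ∈ G)
    (L : Finset (Finset V))
    (hL : ∀ e ∈ L, e.card = r - i ∧ Disjoint e S ∧ S ∪ e ∈ G)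
    (𝓕 : Finset (U → V))
    (hinj : ∀ π ∈ 𝓕, Function.Injective π)
    (hrole : ∀ π ∈ 𝓕, T.image π = S)
    -- each link copy has its vertex set in the complex `G(S)[L]`:
    (hin : ∀ π ∈ 𝓕,
      Disjoint ((Finset.univ \ T).image π) S ∧
      S ∪ (Finset.univ \ T).image π ∈ G ∧
      ∀ e ∈ ((Finset.univ \ T).image π).powersetCard (r - i), e ∈ L)
    -- the link copies are pairwise edge-disjoint, have their edges in `L`,
    -- and together cover `L`:
    (hdisj : ∀ π ∈ 𝓕, ∀ π' ∈ 𝓕, π ≠ π' →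
      ∀ e, e ∈ (F.filter (fun a => T ⊆ a)).image (fun a => (a \ T).image π) →
        e ∉ (F.filter (fun a => T ⊆ a)).image (fun a => (a \ T).image π'))
    (hedges : ∀ π ∈ 𝓕, ∀ a ∈ F, T ⊆ a → (a \ T).image π ∈ L)
    (hcover : ∀ e ∈ L, ∃ π ∈ 𝓕,
      e ∈ (F.filter (fun a => T ⊆ a)).image (fun a => (a \ T).image π))
    -- `𝓕'` is `κ`-well separated:
    (hws1 : ∀ π ∈ 𝓕, ∀ π' ∈ 𝓕, π ≠ π' →
      (((Finset.univ \ T).image π) ∩ ((Finset.univ \ T).image π')).card ≤ r - i)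
    (hws2 : ∀ e : Finset V, e.card = r - i →
      (𝓕.filter (fun π => e ⊆ (Finset.univ \ T).image π)).card ≤ κ) :
    -- conclusion: `S ◁ 𝓕'` is a `κ`-well separated `F`-packing in `G`, and
    -- its edges containing `S` are exactly `S ⊎ L`.
    ((∀ π ∈ 𝓕, (Finset.univ : Finset U).image π ∈ G) ∧
      (∀ π ∈ 𝓕, ∀ π' ∈ 𝓕, π ≠ π' →
        ∀ e, e ∈ F.image (fun a => a.image π) → e ∉ F.image (fun a => a.image π')) ∧
      (∀ π ∈ 𝓕, ∀ π' ∈ 𝓕, π ≠ π' →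
        (((Finset.univ : Finset U).image π) ∩ ((Finset.univ : Finset U).image π')).card ≤ r) ∧
      (∀ e : Finset V, e.card = r →
        (𝓕.filter (fun π => e ⊆ (Finset.univ : Finset U).image π)).card ≤ κ)) ∧
    (∀ e : Finset V,
      ((∃ π ∈ 𝓕, e ∈ F.image (fun a => a.image π)) ∧ S ⊆ e) ↔
        ∃ e' ∈ L, e = S ∪ e') :=
  link_extension_packing_general r i κ hir F hF T G S hS L 𝓕 hinj hrole hin hdisj hedges hcover hws1
    hws2
end

section
/- Let (F*, e*) be a symmetric r-extender: F* is an r-graph, e* ∈ F*, and every r-subset of V(F*) intersecting e* is an edge of F*. Let H be an r-graph with a strong m-regular [k]-colouring c. Then (k,m) ∈ M_r (i.e. (m/(r−i))·binom(k−i, r−1−i) ∈ ℕ for all i ∈ {0,…,r−1}), and the extension ∇_{(F*,e*)}H is obtained from the canonical multi-r-graph M_{k,m}^{(F*,e*)} by vertex identifications: ∇_{(F*,e*)}H ⇝⇝ M_{k,m}^{(F*,e*)}, witnessed by the partition grouping the original vertices by colour and the new vertices by the role they play in V(F*)∖e*. -/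
lemma key_count {V K : Type*} [DecidableEq V] [Fintype K] [DecidableEq K] {r m : ℕ}
    (hr : 1 ≤ r)
    (H : Finset (Finset V)) (c : V → K)
    (himg : ∀ e ∈ H, (e.image c).card = r)
    (hreg : ∀ C' : Finset K, C'.card = r - 1 →
      (H.filter (fun e => C' ⊆ e.image c)).card = m)
    (S : Finset K) (hS : S.card ≤ r - 1) :
    (r - S.card) * (H.filter (fun e => S ⊆ e.image c)).card
      = m * (Fintype.card K - S.card).choose (r - 1 - S.card) := by
  classical
  set i := S.card with hi
  have hir : i < r := by omega
  set 𝒟 := (Sᶜ).powersetCard (r - 1 - i) with h𝒟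
  have hsum1 : ∑ D ∈ 𝒟, (H.filter (fun e => S ∪ D ⊆ e.image c)).card
      = (Fintype.card K - i).choose (r - 1 - i) * m := by
    rw [Finset.sum_congr rfl (fun D hD => ?_), Finset.sum_const, smul_eq_mul]
    · congr 1
      rw [h𝒟, Finset.card_powersetCard, Finset.card_compl]
    · rw [Finset.mem_powersetCard] at hD
      apply hreg
      rw [Finset.card_union_of_disjoint, hD.2]
      · omega
      · exact Finset.disjoint_left.mpr fun a haS haD =>
          (Finset.mem_compl.mp (hD.1 haD)) haS
  have hsum2 : ∑ D ∈ 𝒟, (H.filter (fun e => S ∪ D ⊆ e.image c)).card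
      = (H.filter (fun e => S ⊆ e.image c)).card * (r - i) := by
    have h1 : ∀ D, (H.filter (fun e => S ∪ D ⊆ e.image c)).card
        = ∑ e ∈ H, if S ∪ D ⊆ e.image c then 1 else 0 := fun D =>
      Finset.card_filter _ _
    simp_rw [h1]
    rw [Finset.sum_comm]
    have inner : ∀ e ∈ H, (∑ D ∈ 𝒟, if S ∪ D ⊆ e.image c then 1 else 0)
        = if S ⊆ e.image c then (r - i) else 0 := by
      intro e he
      by_cases hSe : S ⊆ e.image c
      · simp only [hSe, if_true]
        have hfe : 𝒟.filter (fun D => S ∪ D ⊆ e.image c)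
            = (Sᶜ ∩ e.image c).powersetCard (r - 1 - i) := by
          ext D
          simp only [h𝒟, Finset.mem_powersetCard, Finset.mem_filter,
            Finset.union_subset_iff, Finset.subset_inter_iff]
          tauto
        rw [← Finset.card_filter, hfe, Finset.card_powersetCard]
        have hcard : (Sᶜ ∩ e.image c).card = r - i := by
          have h2 : Sᶜ ∩ e.image c = e.image c \ S := by
            ext a; simp only [Finset.mem_inter, Finset.mem_compl,
              Finset.mem_sdiff]; tauto
          rw [h2, Finset.card_sdiff_of_subset hSe, himg e he]
        rw [hcard]
        have h3 : r - 1 - i = (r - i) - 1 := by omega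
        rw [h3, Nat.choose_symm (by omega : 1 ≤ r - i), Nat.choose_one_right]
      · simp only [hSe, if_false]
        refine Finset.sum_eq_zero fun D hD => ?_
        simp [Finset.union_subset_iff, hSe]
    rw [Finset.sum_congr rfl inner, ← Finset.sum_filter,
      Finset.sum_const, smul_eq_mul]
  rw [mul_comm, ← hsum2, hsum1, mul_comm]

/-- Lemma on identification with the canonical multigraph: let `(F*, e*)` be a
symmetric `r`-extender and `H` an `r`-graph with a strong `m`-regular `[k]`-colouring
`c`. Then `(k, m) ∈ M_r`, i.e. `(r-i) ∣ m·binom(k-i, r-1-i)` for all `i < r`, and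
`∇_{(F*,e*)}H ⇝⇝ M_{k,m}^{(F*,e*)}`, witnessed by the map `π` grouping original
vertices by colour and new vertices by their role in `V(F*) ∖ e*`: `π` is injective on
every edge of `∇H`, and for every `r`-set `e'` of `[k] ⊔ V(F*)`, the number of edges
of `∇H` projecting onto `e'` equals the multiplicity of `e'` in the canonical
multi-`r`-graph `M`. -/
theorem nabla_to_canonical_multigraph {U V : Type*}
    [Fintype U] [DecidableEq U] [Fintype V] [DecidableEq V]
    (r k m : ℕ) (hr : 1 ≤ r)
    (Fstar : Finset (Finset U)) (hFstar : ∀ e ∈ Fstar, e.card = r)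
    (estar : Finset U) (hestar : estar ∈ Fstar)
    (hsym : ∀ e' : Finset U, e'.card = r → (e' ∩ estar).Nonempty → e' ∈ Fstar)
    (H : Finset (Finset V)) (hH : ∀ e ∈ H, e.card = r)
    (c : V → Fin k)
    (hstrong : ∀ e ∈ H, Set.InjOn c (e : Set V))
    (hreg : ∀ C' : Finset (Fin k), C'.card = r - 1 →
      (H.filter (fun e => C' ⊆ e.image c)).card = m)
    (ψ : Finset V → U → V)
    (hψ : ∀ e ∈ H, Set.InjOn (ψ e) (estar : Set U) ∧ estar.image (ψ e) = e)
    (mm : Finset V → U → V ⊕ Finset V × U)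
    (hmm : ∀ e u, mm e u = if u ∈ estar then Sum.inl (ψ e u) else Sum.inr (e, u))
    (nabla : Finset (Finset (V ⊕ Finset V × U)))
    (hnabla : nabla = (H.biUnion (fun e => Fstar.image (fun f => f.image (mm e)))) \
        (H.image (fun e => e.image Sum.inl)))
    (π : V ⊕ Finset V × U → Fin k ⊕ U)
    (hπ : ∀ w, π w = Sum.elim (fun v => Sum.inl (c v)) (fun p => Sum.inr p.2) w)
    (M : Finset (Fin k ⊕ U) → ℕ)
    (hM : ∀ e' : Finset (Fin k ⊕ U), e'.card = r → M e' =
      if ∃ u ∈ estar, Sum.inr u ∈ e' then 0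
      else if ∀ u : U, Sum.inr u ∉ e' then 0
      else if ∀ j : Fin k, Sum.inl j ∉ e' then
        (if (Finset.univ.filter (fun u : U => Sum.inr u ∈ e')) ∈ Fstar then
          m * k.choose (r - 1) / r else 0)
      else
        m * (k - (e'.filter (fun w => w.isLeft = true)).card).choose
            (r - 1 - (e'.filter (fun w => w.isLeft = true)).card) /
          (r - (e'.filter (fun w => w.isLeft = true)).card)) :
    (∀ i < r, (r - i) ∣ m * (k - i).choose (r - 1 - i)) ∧
    (∀ e'' ∈ nabla, Set.InjOn π (e'' : Set (V ⊕ Finset V × U))) ∧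
    (∀ e' : Finset (Fin k ⊕ U), e'.card = r →
      (nabla.filter (fun e'' => e''.image π = e')).card = M e') := by
  -- basic facts
  have himg : ∀ e ∈ H, (e.image c).card = r := fun e he => by
    rw [Finset.card_image_of_injOn (hstrong e he), hH e he]
  have hkey : ∀ S : Finset (Fin k), S.card ≤ r - 1 →
      (r - S.card) * (H.filter (fun e => S ⊆ e.image c)).card
        = m * (k - S.card).choose (r - 1 - S.card) := by
    intro S hS
    have := key_count hr H c himg hreg S hS
    rwa [Fintype.card_fin] at this
  -- the function π ∘ mm e
  have hg : ∀ e u, π (mm e u)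
      = if u ∈ estar then Sum.inl (c (ψ e u)) else Sum.inr u := by
    intro e u; rw [hmm]; by_cases h : u ∈ estar <;> simp [h, hπ]
  have himg2 : ∀ e (f : Finset U), (f.image (mm e)).image π
      = f.image (fun u => if u ∈ estar then Sum.inl (c (ψ e u)) else Sum.inr u) := by
    intro e f
    rw [Finset.image_image]
    apply Finset.image_congr
    intro u _
    exact hg e u
  have hgin : ∀ e ∈ H, ∀ u ∈ estar, ψ e u ∈ e := by
    intro e he u hu
    have h1 : ψ e u ∈ estar.image (ψ e) := Finset.mem_image_of_mem (ψ e) hu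
    rwa [(hψ e he).2] at h1
  have hginj : ∀ e ∈ H, Set.InjOn (fun u => c (ψ e u)) (estar : Set U) := by
    intro e he u1 h1 u2 h2 hcc
    have m1 : ψ e u1 ∈ e := hgin e he u1 (Finset.mem_coe.mp h1)
    have m2 : ψ e u2 ∈ e := hgin e he u2 (Finset.mem_coe.mp h2)
    exact (hψ e he).1 h1 h2
      (hstrong e he (Finset.mem_coe.mpr m1) (Finset.mem_coe.mpr m2) hcc)
  have h_est_img : ∀ e ∈ H, estar.image (mm e) = e.image Sum.inl := by
    intro e he
    have h1 : estar.image (mm e) = (estar.image (ψ e)).image Sum.inl := by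
      rw [Finset.image_image]
      apply Finset.image_congr
      intro u hu
      rw [hmm]
      simp [Finset.mem_coe.mp hu]
    rw [h1, (hψ e he).2]
  have hfnsub : ∀ f ∈ Fstar, f ≠ estar → ∃ u ∈ f, u ∉ estar := by
    intro f hfF hfne
    by_contra hcon
    push_neg at hcon
    exact hfne (Finset.eq_of_subset_of_card_le hcon
      (by rw [hFstar f hfF, hFstar estar hestar]))
  have hmemN : ∀ e'', e'' ∈ nabla ↔
      ∃ e ∈ H, ∃ f ∈ Fstar, f ≠ estar ∧ e'' = f.image (mm e) := by
    intro e''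
    rw [hnabla, Finset.mem_sdiff, Finset.mem_biUnion]
    constructor
    · rintro ⟨⟨e, he, hf⟩, hnot⟩
      rw [Finset.mem_image] at hf
      obtain ⟨f, hfF, hfe⟩ := hf
      refine ⟨e, he, f, hfF, ?_, hfe.symm⟩
      rintro rfl
      apply hnot
      rw [← hfe, h_est_img e he]
      exact Finset.mem_image_of_mem _ he
    · rintro ⟨e, he, f, hfF, hfne, rfl⟩
      refine ⟨⟨e, he, Finset.mem_image_of_mem _ hfF⟩, ?_⟩
      intro hmem
      rw [Finset.mem_image] at hmem
      obtain ⟨e₀, _, heq⟩ := hmem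
      obtain ⟨u, huf, hue⟩ := hfnsub f hfF hfne
      have h1 : mm e u ∈ f.image (mm e) := Finset.mem_image_of_mem _ huf
      rw [← heq, Finset.mem_image] at h1
      obtain ⟨v, _, hv⟩ := h1
      rw [hmm] at hv
      simp [hue] at hv
  refine ⟨?_, ?_, ?_⟩
  · -- claim 1
    intro i hi
    by_cases hik : i ≤ k
    · obtain ⟨S, -, hScard⟩ := Finset.exists_subset_card_eq
        (s := (Finset.univ : Finset (Fin k))) (n := i) (by simpa using hik)
      have h1 := hkey S (by omega)
      rw [hScard] at h1
      exact ⟨_, h1.symm⟩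
    · by_cases hri : r - 1 - i = 0
      · have h2 : r - i = 1 := by omega
        rw [h2]
        exact one_dvd _
      · have h3 : (k - i).choose (r - 1 - i) = 0 :=
          Nat.choose_eq_zero_of_lt (by omega)
        simp [h3]
  · -- claim 2
    intro e'' he''
    obtain ⟨e, he, f, hfF, hfne, rfl⟩ := (hmemN e'').mp he''
    intro x hx y hy hxy
    obtain ⟨u1, hu1, rfl⟩ := Finset.mem_image.mp (Finset.mem_coe.mp hx)
    obtain ⟨u2, hu2, rfl⟩ := Finset.mem_image.mp (Finset.mem_coe.mp hy)
    rw [hg e u1, hg e u2] at hxy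
    by_cases h1 : u1 ∈ estar <;> by_cases h2 : u2 ∈ estar <;>
      simp only [h1, h2, if_true, if_false] at hxy
    · rw [hginj e he (Finset.mem_coe.mpr h1) (Finset.mem_coe.mpr h2)
        (Sum.inl_injective hxy)]
    · exact absurd hxy (by simp)
    · exact absurd hxy (by simp)
    · rw [Sum.inr_injective hxy]
  · -- claim 3
    intro e' he'
    rw [hM e' he']
    set A := Finset.univ.filter (fun u : U => Sum.inr u ∈ e') with hA
    set B := Finset.univ.filter (fun j : Fin k => Sum.inl j ∈ e') with hB
    set T : Finset V → Finset U :=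
      fun e => estar.filter (fun u => c (ψ e u) ∈ B) with hT
    have hTest : ∀ e, T e ⊆ estar := fun e => Finset.filter_subset _ _
    have hsplit : e' = B.image Sum.inl ∪ A.image Sum.inr := by
      ext w
      cases w with
      | inl j => simp [hB, hA]
      | inr u => simp [hB, hA]
    have hABcard : B.card + A.card = r := by
      rw [← he']
      conv_rhs => rw [hsplit]
      rw [Finset.card_union_of_disjoint, Finset.card_image_of_injective _ Sum.inl_injective,
        Finset.card_image_of_injective _ Sum.inr_injective]
      · rw [Finset.disjoint_left]
        rintro w hw1 hw2
        obtain ⟨j, -, rfl⟩ := Finset.mem_image.mp hw1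
        obtain ⟨u, -, h⟩ := Finset.mem_image.mp hw2
        exact Sum.inr_ne_inl h
    have hileft : (e'.filter (fun w => w.isLeft = true)).card = B.card := by
      have h1 : e'.filter (fun w => w.isLeft = true) = B.image Sum.inl := by
        ext w
        cases w <;> simp [hB]
      rw [h1, Finset.card_image_of_injective _ Sum.inl_injective]
    by_cases hc1 : ∃ u ∈ estar, Sum.inr u ∈ e'
    · rw [if_pos hc1, Finset.card_eq_zero, Finset.filter_eq_empty_iff]
      intro e'' he'' himgeq
      obtain ⟨e, he, f, hfF, hfne, rfl⟩ := (hmemN _).mp he''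
      obtain ⟨u, hue, hue'⟩ := hc1
      rw [← himgeq, himg2] at hue'
      obtain ⟨x, hxf, hx⟩ := Finset.mem_image.mp hue'
      by_cases hxe : x ∈ estar
      · simp [hxe] at hx
      · simp only [hxe, if_false, Sum.inr.injEq] at hx
        exact hxe (hx ▸ hue)
    rw [if_neg hc1]
    have hAestar : ∀ u ∈ A, u ∉ estar := by
      intro u hu hue
      exact hc1 ⟨u, hue, (Finset.mem_filter.mp hu).2⟩
    by_cases hc2 : ∀ u : U, Sum.inr u ∉ e'
    · rw [if_pos hc2, Finset.card_eq_zero, Finset.filter_eq_empty_iff]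
      intro e'' he'' himgeq
      obtain ⟨e, he, f, hfF, hfne, rfl⟩ := (hmemN _).mp he''
      obtain ⟨u, huf, hue⟩ := hfnsub f hfF hfne
      apply hc2 u
      rw [← himgeq, himg2]
      exact Finset.mem_image.mpr ⟨u, huf, by simp [hue]⟩
    rw [if_neg hc2]
    push_neg at hc2
    obtain ⟨u₀, hu₀⟩ := hc2
    have hAne : A.Nonempty := ⟨u₀, Finset.mem_filter.mpr ⟨Finset.mem_univ _, hu₀⟩⟩
    have hforward : ∀ e'' ∈ nabla, e''.image π = e' →
        ∃ e ∈ H, B ⊆ e.image c ∧ (T e ∪ A) ∈ Fstar ∧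
          e'' = (T e ∪ A).image (mm e) := by
      intro e'' he'' himgeq
      obtain ⟨e, he, f, hfF, hfne, rfl⟩ := (hmemN _).mp he''
      rw [himg2] at himgeq
      have hfA : f \ estar = A := by
        ext u
        simp only [Finset.mem_sdiff, hA, Finset.mem_filter, Finset.mem_univ,
          true_and]
        constructor
        · rintro ⟨huf, hue⟩
          rw [← himgeq]
          exact Finset.mem_image.mpr ⟨u, huf, by simp [hue]⟩
        · intro hue'
          rw [← himgeq] at hue'
          obtain ⟨x, hxf, hx⟩ := Finset.mem_image.mp hue'
          by_cases hxe : x ∈ estar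
          · simp [hxe] at hx
          · simp only [hxe, if_false, Sum.inr.injEq] at hx
            exact ⟨hx ▸ hxf, hx ▸ hxe⟩
      have hfT : f ∩ estar = T e := by
        ext u
        simp only [Finset.mem_inter, hT, Finset.mem_filter]
        constructor
        · rintro ⟨huf, hue⟩
          refine ⟨hue, ?_⟩
          have h1 : Sum.inl (c (ψ e u)) ∈ e' := by
            rw [← himgeq]
            exact Finset.mem_image.mpr ⟨u, huf, by simp [hue]⟩
          simpa [hB] using h1
        · rintro ⟨hue, hcB⟩
          refine ⟨?_, hue⟩
          have h1 : Sum.inl (c (ψ e u)) ∈ e' := by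
            rw [hB] at hcB
            simpa using (Finset.mem_filter.mp hcB).2
          rw [← himgeq] at h1
          obtain ⟨x, hxf, hx⟩ := Finset.mem_image.mp h1
          by_cases hxe : x ∈ estar
          · simp only [hxe, if_true, Sum.inl.injEq] at hx
            have h2 := hginj e he (Finset.mem_coe.mpr hxe)
              (Finset.mem_coe.mpr hue) hx
            exact h2 ▸ hxf
          · simp [hxe] at hx
      have hBsub : B ⊆ e.image c := by
        intro j hj
        have h1 : Sum.inl j ∈ e' := by
          rw [hB] at hj
          simpa using (Finset.mem_filter.mp hj).2
        rw [← himgeq] at h1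
        obtain ⟨x, hxf, hx⟩ := Finset.mem_image.mp h1
        by_cases hxe : x ∈ estar
        · simp only [hxe, if_true, Sum.inl.injEq] at hx
          exact Finset.mem_image.mpr ⟨ψ e x, hgin e he x hxe, hx⟩
        · simp [hxe] at hx
      have hfeq : f = T e ∪ A := by
        rw [← hfT, ← hfA]
        ext u
        simp only [Finset.mem_union, Finset.mem_inter, Finset.mem_sdiff]
        tauto
      exact ⟨e, he, hBsub, hfeq ▸ hfF, by rw [← hfeq]⟩
    by_cases hB0 : B = ∅ ∧ A ∉ Fstar
    · have hzero : (nabla.filter (fun e'' => e''.image π = e')).card = 0 := by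
        rw [Finset.card_eq_zero, Finset.filter_eq_empty_iff]
        intro e'' he'' himgeq
        obtain ⟨e, he, -, hTA, -⟩ := hforward e'' he'' himgeq
        apply hB0.2
        have hTe : T e = ∅ := by
          simp [hT, hB0.1]
        rwa [hTe, Finset.empty_union] at hTA
      rw [hzero]
      have hno : ∀ j : Fin k, Sum.inl j ∉ e' := by
        intro j hj
        have h1 : j ∈ B := by
          rw [hB]
          simpa using hj
        rw [hB0.1] at h1
        exact absurd h1 (Finset.notMem_empty j)
      rw [if_pos hno, if_neg hB0.2]
    · have hmain : nabla.filter (fun e'' => e''.image π = e')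
          = (H.filter (fun e => B ⊆ e.image c)).image
              (fun e => (T e ∪ A).image (mm e)) := by
        ext e''
        simp only [Finset.mem_filter, Finset.mem_image]
        constructor
        · rintro ⟨he'', himgeq⟩
          obtain ⟨e, he, hBsub, hTA, heq⟩ := hforward e'' he'' himgeq
          exact ⟨e, ⟨he, hBsub⟩, heq.symm⟩
        · rintro ⟨e, ⟨he, hBsub⟩, rfl⟩
          have hTimg : (T e).image (fun u => c (ψ e u)) = B := by
            apply Finset.Subset.antisymm
            · intro j hj
              obtain ⟨u, hu, rfl⟩ := Finset.mem_image.mp hj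
              exact (Finset.mem_filter.mp hu).2
            · intro j hj
              obtain ⟨v, hv, rfl⟩ := Finset.mem_image.mp (hBsub hj)
              rw [← (hψ e he).2] at hv
              obtain ⟨u, hu, rfl⟩ := Finset.mem_image.mp hv
              exact Finset.mem_image.mpr ⟨u, Finset.mem_filter.mpr ⟨hu, hj⟩, rfl⟩
          have hTcard : (T e).card = B.card := by
            rw [← hTimg]
            exact (Finset.card_image_of_injOn
              ((hginj e he).mono (by exact_mod_cast hTest e))).symm
          have hdisj : Disjoint (T e) A := Finset.disjoint_left.mpr
            (fun u hu hua => hAestar u hua (hTest e hu))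
          have hfcard : (T e ∪ A).card = r := by
            rw [Finset.card_union_of_disjoint hdisj, hTcard, hABcard]
          have hfF : (T e ∪ A) ∈ Fstar := by
            by_cases hBe : B = ∅
            · have hTe : T e = ∅ := by simp [hT, hBe]
              rw [hTe, Finset.empty_union]
              by_contra hAF
              exact hB0 ⟨hBe, hAF⟩
            · apply hsym _ hfcard
              have hTne : (T e).Nonempty := by
                rw [← Finset.card_pos, hTcard, Finset.card_pos]
                exact Finset.nonempty_iff_ne_empty.mpr hBe
              obtain ⟨u, hu⟩ := hTne
              exact ⟨u, Finset.mem_inter.mpr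
                ⟨Finset.mem_union_left _ hu, hTest e hu⟩⟩
          have hfne : T e ∪ A ≠ estar := by
            obtain ⟨a, ha⟩ := hAne
            intro hcon
            exact hAestar a ha (hcon ▸ Finset.mem_union_right _ ha)
          refine ⟨(hmemN _).mpr ⟨e, he, _, hfF, hfne, rfl⟩, ?_⟩
          rw [himg2, Finset.image_union]
          have h1 : (T e).image
              (fun u => if u ∈ estar then Sum.inl (c (ψ e u)) else Sum.inr u)
              = B.image Sum.inl := by
            rw [← hTimg, Finset.image_image]
            apply Finset.image_congr
            intro u hu
            simp [hTest e (Finset.mem_coe.mp hu)]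
          have h2 : A.image
              (fun u => if u ∈ estar then Sum.inl (c (ψ e u)) else Sum.inr u)
              = A.image Sum.inr := by
            apply Finset.image_congr
            intro u hu
            simp [hAestar u (Finset.mem_coe.mp hu)]
          rw [h1, h2, ← hsplit]
      have hΦinj : Set.InjOn (fun e => (T e ∪ A).image (mm e))
          ↑(H.filter (fun e => B ⊆ e.image c)) := by
        intro e1 h1 e2 h2 heq
        obtain ⟨a, ha⟩ := hAne
        have hae : a ∉ estar := hAestar a ha
        have ha1 : mm e1 a ∈ (T e1 ∪ A).image (mm e1) :=
          Finset.mem_image_of_mem _ (Finset.mem_union_right _ ha)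
        have heq' : Finset.image (mm e1) (T e1 ∪ A)
            = Finset.image (mm e2) (T e2 ∪ A) := heq
        rw [heq'] at ha1
        obtain ⟨x, hx, hxe⟩ := Finset.mem_image.mp ha1
        rw [hmm, hmm] at hxe
        by_cases hxs : x ∈ estar
        · simp [hxs, hae] at hxe
        · simp only [hxs, hae, if_false, Sum.inr.injEq, Prod.mk.injEq] at hxe
          exact hxe.1.symm
      rw [hmain, Finset.card_image_of_injOn hΦinj]
      by_cases hBe : B = ∅
      · have hno : ∀ j : Fin k, Sum.inl j ∉ e' := by
          intro j hj
          have h1 : j ∈ B := by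
            rw [hB]
            simpa using hj
          rw [hBe] at h1
          exact absurd h1 (Finset.notMem_empty j)
        have hAF : A ∈ Fstar := by
          by_contra hAF
          exact hB0 ⟨hBe, hAF⟩
        rw [if_pos hno, if_pos hAF]
        have hfilter : H.filter (fun e => B ⊆ e.image c) = H :=
          Finset.filter_true_of_mem (fun e _ => by simp [hBe])
        have hk0 := hkey ∅ (by simp)
        simp only [Finset.card_empty, Nat.sub_zero] at hk0
        have hfilter2 : H.filter (fun e => (∅ : Finset (Fin k)) ⊆ e.image c) = H :=
          Finset.filter_true_of_mem (fun e _ => by simp)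
        rw [hfilter2] at hk0
        rw [hfilter, ← hk0, Nat.mul_div_cancel_left _ (by omega : 0 < r)]
      · have hyes : ¬ ∀ j : Fin k, Sum.inl j ∉ e' := by
          push_neg
          obtain ⟨j, hj⟩ := Finset.nonempty_iff_ne_empty.mpr hBe
          rw [hB] at hj
          exact ⟨j, by simpa using (Finset.mem_filter.mp hj).2⟩
        rw [if_neg hyes, hileft]
        have hApos : 0 < A.card := Finset.card_pos.mpr hAne
        have hBcardle : B.card ≤ r - 1 := by omega
        have hk1 := hkey B hBcardle
        rw [← hk1, Nat.mul_div_cancel_left _ (by omega : 0 < r - B.card)]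
end
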